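/- arXiv:2507.03786 — 2 statements merged into one kernel-verified Lean document; each statement's English description precedes it below -/
import Mathlib

section
/- Let k be an integer, I and H multigraphs on the finite set V, U ⊆ V, and let f and P be as defined. Let x ∈ P satisfy 0 < x_e < 1 for every e ∈ E, where E ≠ ∅, and suppose there exists a laminar x-defining family L. Then there is an x-core C such that |δ_E(C)| ∈ {2, 3} and f(C) ∈ {1, 2}; moreover, no edge of E has both endpoints in C. -/
open Finset

variable {V : Type*} [Fintype V] [DecidableEq V] {E : Type*} [Fintype E] [DecidableEq E]

/-- `d_m(S,T)`: total multiplicity of edges of the multigraph `m` with one end in `S` and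
the other in `T` (for disjoint `S`, `T`). -/
def dBetween (m : V → V → ℕ) (S T : Finset V) : ℕ := ∑ u ∈ S, ∑ v ∈ T, m u v

/-- `d_m(S) = d_m(S, V \ S)`. -/
def degS (m : V → V → ℕ) (S : Finset V) : ℕ := dBetween m S Sᶜ

/-- Edges of the edge-indexed multigraph `(V, E)` (endpoint map `ends`) with exactly one
endpoint in `S`. -/
def cutEdges (ends : E → V × V) (S : Finset V) : Finset E :=
  univ.filter fun e => ((ends e).1 ∈ S ∧ (ends e).2 ∉ S) ∨ ((ends e).1 ∉ S ∧ (ends e).2 ∈ S)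

/-- A cut is a nonempty proper subset of `V`. -/
def IsCut (S : Finset V) : Prop := S.Nonempty ∧ S ≠ univ

/-- The relaxed residual function `f`:
`f(S) = k - d_I(S) - 2 d_H(S) - 2` if `S = {u}` or `V \ S = {u}` for some `u ∈ U`,
and `f(S) = k - d_I(S) - 2 d_H(S)` otherwise. -/
def fRes (k : ℤ) (I H : V → V → ℕ) (U : Finset V) (S : Finset V) : ℤ :=
  if ∃ u ∈ U, S = {u} ∨ Sᶜ = {u} then
    k - (degS I S : ℤ) - 2 * (degS H S : ℤ) - 2
  else
    k - (degS I S : ℤ) - 2 * (degS H S : ℤ)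

/-- The polytope `P = {x ∈ [0,1]^E : x(δ_E(S)) ≥ f(S) for every cut S}`. -/
def polyP (k : ℤ) (I H : V → V → ℕ) (U : Finset V) (ends : E → V × V) : Set (E → ℝ) :=
  {x | (∀ e, 0 ≤ x e ∧ x e ≤ 1) ∧
    ∀ S : Finset V, IsCut S → (fRes k I H U S : ℝ) ≤ ∑ e ∈ cutEdges ends S, x e}

/-- A set `S` is `x`-tight if `x(δ_E(S)) = f(S)`. -/
def IsTight (k : ℤ) (I H : V → V → ℕ) (U : Finset V) (ends : E → V × V) (x : E → ℝ)
    (S : Finset V) : Prop :=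
  ∑ e ∈ cutEdges ends S, x e = (fRes k I H U S : ℝ)

/-- An `x`-core: an inclusion-minimal `f`-positive `x`-tight cut. -/
def IsCore (k : ℤ) (I H : V → V → ℕ) (U : Finset V) (ends : E → V × V) (x : E → ℝ)
    (C : Finset V) : Prop :=
  IsCut C ∧ 0 < fRes k I H U C ∧ IsTight k I H U ends x C ∧
    ∀ C' : Finset V, C' ⊂ C → IsCut C' → 0 < fRes k I H U C' →
      IsTight k I H U ends x C' → False

/-- The incidence vector `χ_{δ_E(S)} ∈ ℝ^E` of the cut edge set `δ_E(S)`. -/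
def chiCut (ends : E → V × V) (S : Finset V) : E → ℝ :=
  fun e => if e ∈ cutEdges ends S then 1 else 0

/-- A family of sets is laminar if any two members are either disjoint or nested. -/
def LaminarF {V : Type*} (F : Finset (Finset V)) : Prop :=
  ∀ A ∈ F, ∀ B ∈ F, Disjoint A B ∨ A ⊆ B ∨ B ⊆ A

/-- An `x`-defining family: a family `L` of `f`-positive `x`-tight cuts with `|L| = |E|`
whose incidence vectors `χ_{δ_E(S)}`, `S ∈ L`, are linearly independent. -/
def IsDefining (k : ℤ) (I H : V → V → ℕ) (U : Finset V) (ends : E → V × V) (x : E → ℝ)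
    (L : Finset (Finset V)) : Prop :=
  (∀ S ∈ L, IsCut S ∧ 0 < fRes k I H U S ∧ IsTight k I H U ends x S) ∧
  L.card = Fintype.card E ∧
  LinearIndependent ℝ (fun S : {A : Finset V // A ∈ L} => chiCut ends S.1)

/-!
Count edge ends. Nested members `R ⊂ S` of `L` are separated by at least two edge ends: their
cuts differ exactly in `δ(S \ R)`, which is nonempty by independence and is not one fractional
edge because `f` is integral. If every minimal member of `L` had at least four cut edges, an
induction over the laminar forest would give `2|L| + 2 ≤ 2|E|`, contradicting `|L| = |E|`. So a
minimal `S ∈ L` has `|δ(S)| ≤ 3`. The vectors `χ_{δ(T)}`, `T ∈ L`, span `ℝ^E`, so every edge is cut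
by a member of `L`; by laminarity and minimality no edge lies inside `S`. Hence an `x`-core
`C ⊆ S` has `δ(C) ⊆ δ(S)`, and `1 ≤ f(C) = x(δ(C)) < |δ(C)| ≤ 3`.
-/

section Laminar

variable {α : Type*} {F G : Finset (Finset α)}

lemma LaminarF.mono (hF : LaminarF F) (hGF : G ⊆ F) : LaminarF G :=
  fun A hA B hB => hF A (hGF hA) B (hGF hB)

lemma nonempty_of_forall_minimal_pos (w : α → ℕ)
    (hleaf : ∀ S, Minimal (· ∈ F) S → 0 < ∑ v ∈ S, w v) :
    ∀ S ∈ F, S.Nonempty := fun S hS => nonempty_iff_ne_empty.2 fun h => by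
  subst h
  simpa using hleaf ∅ ⟨hS, fun B _ _ => empty_subset B⟩

variable [DecidableEq α]

def maximals (G : Finset (Finset α)) : Finset (Finset α) := {M ∈ G | ∀ B ∈ G, ¬ M ⊂ B}

lemma mem_maximals {M : Finset α} : M ∈ maximals G ↔ Maximal (· ∈ G) M := by
  rw [maximals, mem_filter, maximal_iff_forall_gt]
  exact and_congr_right fun _ => ⟨fun h B hMB hB => h B hB hMB, fun h B hB hMB => h hMB hB⟩

lemma exists_subset_mem_maximals {S : Finset α} (hS : S ∈ G) : ∃ M ∈ maximals G, S ⊆ M := by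
  obtain ⟨M, hSM, hM⟩ := G.exists_le_maximal hS
  exact ⟨M, mem_maximals.2 hM, hSM⟩

lemma maximals_eq_empty : maximals G = ∅ ↔ G = ∅ := by
  refine ⟨fun h => eq_empty_iff_forall_notMem.2 fun S hS => ?_, fun h => h ▸ filter_empty _⟩
  obtain ⟨M, hM, -⟩ := exists_subset_mem_maximals hS
  exact notMem_empty M (h ▸ hM)

lemma card_filter_subset_eq_card_filter_ssubset_add_one {S : Finset α} (hS : S ∈ F) :
    #{B ∈ F | B ⊆ S} = #{B ∈ F | B ⊂ S} + 1 := by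
  have : {B ∈ F | B ⊆ S} = insert S {B ∈ F | B ⊂ S} := by
    ext B
    simp only [mem_insert, mem_filter, subset_iff_ssubset_or_eq]
    constructor
    · rintro ⟨hB, hBS | rfl⟩ <;> tauto
    · rintro (rfl | ⟨hB, hBS⟩) <;> tauto
  exact this ▸ card_insert_of_notMem fun h => lt_irrefl S (mem_filter.1 h).2

lemma LaminarF.pairwiseDisjoint_maximals (hG : LaminarF G) :
    (maximals G : Set (Finset α)).PairwiseDisjoint id := by
  intro A hA B hB hAB
  have hA' := mem_maximals.1 hA
  have hB' := mem_maximals.1 hB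
  rcases hG A hA'.prop B hB'.prop with h | h | h
  · exact h
  · exact absurd (hA'.eq_of_le hB'.prop h) hAB
  · exact absurd (hB'.eq_of_le hA'.prop h) hAB.symm

lemma LaminarF.card_eq_sum_maximals (hG : LaminarF G) (hne : ∀ S ∈ G, S.Nonempty) :
    #G = ∑ M ∈ maximals G, #{S ∈ G | S ⊆ M} := by
  have hcover : G = (maximals G).biUnion fun M => {S ∈ G | S ⊆ M} := by
    ext S
    simp only [mem_biUnion, mem_filter]
    refine ⟨fun hS => ?_, fun ⟨_, _, hS, _⟩ => hS⟩
    obtain ⟨M, hM, hSM⟩ := exists_subset_mem_maximals hS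
    exact ⟨M, hM, hS, hSM⟩
  conv_lhs => rw [hcover]
  refine card_biUnion fun A hA B hB hAB => disjoint_left.2 fun S hSA hSB => ?_
  obtain ⟨v, hv⟩ := hne S (mem_filter.1 hSA).1
  exact disjoint_left.1 (hG.pairwiseDisjoint_maximals hA hB hAB)
    ((mem_filter.1 hSA).2 hv) ((mem_filter.1 hSB).2 hv)

lemma LaminarF.two_mul_card_add_two_mul_card_maximals_le (hG : LaminarF G)
    (hne : ∀ S ∈ G, S.Nonempty) (w : α → ℕ) {T : Finset α} (hT : ∀ S ∈ G, S ⊆ T)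
    (hM : ∀ M ∈ maximals G, 2 * #{S ∈ G | S ⊆ M} + 2 ≤ ∑ v ∈ M, w v) :
    2 * #G + 2 * #(maximals G) ≤ ∑ v ∈ T, w v :=
  calc 2 * #G + 2 * #(maximals G) = ∑ M ∈ maximals G, (2 * #{S ∈ G | S ⊆ M} + 2) := by
        rw [sum_add_distrib, ← mul_sum, hG.card_eq_sum_maximals hne, sum_const, smul_eq_mul]
        ring
    _ ≤ ∑ M ∈ maximals G, ∑ v ∈ M, w v := sum_le_sum hM
    _ = ∑ v ∈ (maximals G).biUnion id, w v := (sum_biUnion hG.pairwiseDisjoint_maximals).symm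
    _ ≤ ∑ v ∈ T, w v :=
        sum_le_sum_of_subset (biUnion_subset.2 fun M hM => hT M (mem_filter.1 hM).1)

variable (w : α → ℕ)

/-- Induction over the laminar forest below `S`: with no child, `hleaf` pays for `S`; with one
child `R`, `hgap` pays for `S` on `S \ R`; with at least two children, their surplus `2`s do. -/
lemma LaminarF.two_mul_card_filter_subset_add_two_le (hF : LaminarF F)
    (hleaf : ∀ S, Minimal (· ∈ F) S → 4 ≤ ∑ v ∈ S, w v)
    (hgap : ∀ S ∈ F, ∀ R ∈ F, R ⊂ S → 2 ≤ ∑ v ∈ S \ R, w v) {S : Finset α} (hS : S ∈ F) :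
    2 * #{B ∈ F | B ⊆ S} + 2 ≤ ∑ v ∈ S, w v := by
  induction S using Finset.strongInduction with | H S ih => ?_
  rw [card_filter_subset_eq_card_filter_ssubset_add_one hS]
  set G := {B ∈ F | B ⊂ S}
  have hG : LaminarF G := hF.mono (filter_subset _ _)
  have hGne : ∀ B ∈ G, B.Nonempty := fun B hB => nonempty_of_forall_minimal_pos w
    (fun S hS => four_pos.trans_le (hleaf S hS)) B (mem_filter.1 hB).1
  have hchild : ∀ M ∈ maximals G, M ∈ F ∧ M ⊂ S := fun M hM => mem_filter.1 (mem_filter.1 hM).1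
  have hbelow : ∀ M ∈ maximals G, {B ∈ G | B ⊆ M} = {B ∈ F | B ⊆ M} := fun M hM => by
    ext B
    simp only [G, mem_filter, and_congr_left_iff]
    exact fun hBM => and_iff_left_of_imp fun _ => lt_of_le_of_lt hBM (hchild M hM).2
  obtain ht | ht | ht : #(maximals G) = 0 ∨ #(maximals G) = 1 ∨ 2 ≤ #(maximals G) := by omega
  · have hGempty : G = ∅ := maximals_eq_empty.1 (card_eq_zero.1 ht)
    have hSmin : Minimal (· ∈ F) S := minimal_iff_forall_lt.2
      ⟨hS, fun B hBS hB => notMem_empty B (hGempty ▸ mem_filter.2 ⟨hB, hBS⟩)⟩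
    have := hleaf S hSmin
    rw [hGempty, card_empty]
    omega
  · obtain ⟨R, hR⟩ := card_eq_one.1 ht
    have hRmem : R ∈ maximals G := hR ▸ mem_singleton_self R
    have hGR := hG.card_eq_sum_maximals hGne
    rw [hR, sum_singleton, hbelow R hRmem] at hGR
    have hRS := hchild R hRmem
    have := ih R hRS.2 hRS.1
    have := hgap S hS R hRS.1 hRS.2
    rw [← sum_sdiff hRS.2.subset, hGR]
    omega
  · have hIH : ∀ M ∈ maximals G, 2 * #{B ∈ G | B ⊆ M} + 2 ≤ ∑ v ∈ M, w v := fun M hM => by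
      rw [hbelow M hM]
      exact ih M (hchild M hM).2 (hchild M hM).1
    have := hG.two_mul_card_add_two_mul_card_maximals_le hGne w
      (fun B hB => (mem_filter.1 hB).2.subset) hIH
    omega

lemma LaminarF.two_mul_card_add_two_le [Fintype α] (hF : LaminarF F)
    (hleaf : ∀ S, Minimal (· ∈ F) S → 4 ≤ ∑ v ∈ S, w v)
    (hgap : ∀ S ∈ F, ∀ R ∈ F, R ⊂ S → 2 ≤ ∑ v ∈ S \ R, w v) (hFne : F.Nonempty) :
    2 * #F + 2 ≤ ∑ v, w v := by
  obtain ⟨S, hS⟩ := hFne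
  obtain ⟨M, hM, -⟩ := exists_subset_mem_maximals hS
  have := hF.two_mul_card_add_two_mul_card_maximals_le
    (nonempty_of_forall_minimal_pos w fun S hS => four_pos.trans_le (hleaf S hS)) w
    (fun _ _ => subset_univ _)
    fun M hM => hF.two_mul_card_filter_subset_add_two_le w hleaf hgap (mem_maximals.1 hM).prop
  have := card_pos.2 ⟨M, hM⟩
  omega

end Laminar

open scoped symmDiff

lemma exists_apply_ne_zero_of_linearIndependent {ι κ K : Type*} [Fintype ι] [Fintype κ]
    [Field K] {v : ι → κ → K} (hv : LinearIndependent K v)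
    (hcard : Fintype.card ι = Fintype.card κ) (j : κ) : ∃ i, v i j ≠ 0 := by
  by_contra! h
  have hspan := hv.span_eq_top_of_card_eq_finrank'
    (hcard.trans (Module.finrank_fintype_fun_eq_card K).symm)
  have hker : Set.range v ⊆ LinearMap.ker (LinearMap.proj j : (κ → K) →ₗ[K] K) := by
    rintro _ ⟨i, rfl⟩
    exact h i
  have := (hspan ▸ Submodule.span_le.2 hker) (Submodule.mem_top (x := fun _ => (1 : K)))
  simp at this

lemma abs_sum_sub_sum_of_symmDiff_eq_singleton {ι : Type*} [DecidableEq ι] {A B : Finset ι}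
    {i : ι} (x : ι → ℝ) (h : A ∆ B = {i}) : |∑ a ∈ A, x a - ∑ b ∈ B, x b| = |x i| := by
  have hAB : A \ B ⊆ {i} := h ▸ symmDiff_subset_sdiff
  have hBA : B \ A ⊆ {i} := h ▸ symmDiff_subset_sdiff'
  have hdisj : Disjoint (A \ B) (B \ A) := disjoint_sdiff_sdiff
  rw [Finset.symmDiff_def] at h
  rw [← sum_sdiff_sub_sum_sdiff]
  rcases subset_singleton_iff.1 hAB with h1 | h1 <;>
    rcases subset_singleton_iff.1 hBA with h2 | h2 <;>
    rw [h1, h2] at h hdisj ⊢ <;> simp at h hdisj ⊢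

section Cuts

variable {α β : Type*} [DecidableEq α] [Fintype β] (ends : β → α × α)

lemma mem_cutEdges {S : Finset α} {e : β} :
    e ∈ cutEdges ends S ↔
      (ends e).1 ∈ S ∧ (ends e).2 ∉ S ∨ (ends e).1 ∉ S ∧ (ends e).2 ∈ S := by
  simp [cutEdges]

/-- The degree of `v`, a loop at `v` counting twice. -/
def edgeDeg (v : α) : ℕ := #{e | (ends e).1 = v} + #{e | (ends e).2 = v}

lemma sum_card_filter_eq_card_filter_mem (g : β → α) (S : Finset α) :
    ∑ v ∈ S, #{e | g e = v} = #{e | g e ∈ S} := by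
  rw [card_eq_sum_card_fiberwise (s := {e | g e ∈ S}) (t := S) fun e he => (mem_filter.1 he).2]
  refine sum_congr rfl fun v hv => ?_
  rw [filter_filter]
  exact congrArg card <| filter_congr fun e _ => ⟨fun h => ⟨h ▸ hv, h⟩, And.right⟩

lemma sum_edgeDeg [Fintype α] : ∑ v, edgeDeg ends v = 2 * Fintype.card β := by
  simp only [edgeDeg, sum_add_distrib, sum_card_filter_eq_card_filter_mem, mem_univ, filter_true,
    card_univ]
  ring

lemma card_cutEdges_le_sum_edgeDeg (S : Finset α) :
    #(cutEdges ends S) ≤ ∑ v ∈ S, edgeDeg ends v := by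
  classical
  simp only [edgeDeg, sum_add_distrib, sum_card_filter_eq_card_filter_mem]
  refine (card_le_card fun e he => ?_).trans (card_union_le _ _)
  rw [mem_cutEdges] at he
  simp only [mem_union, mem_filter, mem_univ, true_and]
  tauto

lemma symmDiff_cutEdges [DecidableEq β] (S R : Finset α) :
    cutEdges ends S ∆ cutEdges ends R = cutEdges ends (S ∆ R) := by
  ext e
  simp only [mem_symmDiff, mem_cutEdges]
  tauto

lemma cutEdges_subset_of_subset {C S : Finset α} (hCS : C ⊆ S)
    (hS : ∀ e, ¬((ends e).1 ∈ S ∧ (ends e).2 ∈ S)) : cutEdges ends C ⊆ cutEdges ends S := by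
  intro e he
  have := hS e
  rw [mem_cutEdges] at he ⊢
  rcases he with ⟨h1, h2⟩ | ⟨h1, h2⟩
  · have := hCS h1
    tauto
  · have := hCS h2
    tauto

end Cuts

section Tight

variable {α β : Type*} [Fintype α] [DecidableEq α] [Fintype β] {k : ℤ} {I H : α → α → ℕ}
  {U : Finset α} {ends : β → α × α} {x : β → ℝ}

lemma exists_isCore_subset {S : Finset α} (hS : IsCut S) (hpos : 0 < fRes k I H U S)
    (htight : IsTight k I H U ends x S) : ∃ C ⊆ S, IsCore k I H U ends x C := by
  obtain ⟨C, hCS, hC⟩ := exists_minimal_le_of_wellFoundedLT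
    (fun C => IsCut C ∧ 0 < fRes k I H U C ∧ IsTight k I H U ends x C) S ⟨hS, hpos, htight⟩
  exact ⟨C, hCS, hC.prop.1, hC.prop.2.1, hC.prop.2.2,
    fun C' hC'C h1 h2 h3 => hC.not_prop_of_lt hC'C ⟨h1, h2, h3⟩⟩

lemma IsTight.fRes_lt_card_cutEdges {C : Finset α} (hC : IsTight k I H U ends x C)
    (hpos : 0 < fRes k I H U C) (hx : ∀ e, x e < 1) : fRes k I H U C < #(cutEdges ends C) := by
  have hne : (cutEdges ends C).Nonempty :=
    nonempty_of_sum_ne_zero (by rw [hC]; exact_mod_cast hpos.ne')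
  have hlt : ∑ e ∈ cutEdges ends C, x e < ∑ e ∈ cutEdges ends C, 1 :=
    sum_lt_sum_of_nonempty hne fun e _ => hx e
  rw [hC, sum_const, nsmul_one] at hlt
  exact_mod_cast hlt

end Tight

namespace IsDefining

variable {k : ℤ} {I H : V → V → ℕ} {U : Finset V} {ends : E → V × V} {x : E → ℝ}
  {L : Finset (Finset V)}

lemma eq_of_cutEdges_eq (hL : IsDefining k I H U ends x L) {S R : Finset V} (hS : S ∈ L)
    (hR : R ∈ L) (h : cutEdges ends S = cutEdges ends R) : S = R := by
  have : (⟨S, hS⟩ : {A // A ∈ L}) = ⟨R, hR⟩ := hL.2.2.injective (by unfold chiCut; rw [h])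
  exact congrArg Subtype.val this

lemma exists_mem_cutEdges (hL : IsDefining k I H U ends x L) (e : E) :
    ∃ S ∈ L, e ∈ cutEdges ends S := by
  obtain ⟨⟨S, hS⟩, he⟩ := exists_apply_ne_zero_of_linearIndependent hL.2.2
    (by rw [Fintype.card_coe, hL.2.1]) e
  exact ⟨S, hS, by_contra fun h => he (if_neg h)⟩

lemma two_le_sum_edgeDeg_sdiff (hL : IsDefining k I H U ends x L)
    (hx : ∀ e, 0 < x e ∧ x e < 1) {S R : Finset V} (hS : S ∈ L) (hR : R ∈ L) (hRS : R ⊂ S) :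
    2 ≤ ∑ v ∈ S \ R, edgeDeg ends v := by
  have hD : cutEdges ends S ∆ cutEdges ends R = cutEdges ends (S \ R) := by
    rw [symmDiff_cutEdges, symmDiff_of_ge hRS.subset]
  have hD0 : #(cutEdges ends (S \ R)) ≠ 0 := fun h0 =>
    hRS.ne' (hL.eq_of_cutEdges_eq hS hR (symmDiff_eq_empty.1 (hD.trans (card_eq_zero.1 h0))))
  have hD1 : #(cutEdges ends (S \ R)) ≠ 1 := fun h1 => by
    obtain ⟨e, he⟩ := card_eq_one.1 h1
    have habs : |((fRes k I H U S - fRes k I H U R : ℤ) : ℝ)| = x e := by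
      push_cast
      rw [← (hL.1 S hS).2.2, ← (hL.1 R hR).2.2,
        abs_sum_sub_sum_of_symmDiff_eq_singleton x (hD.trans he), abs_of_pos (hx e).1]
    have h0 : fRes k I H U S - fRes k I H U R = 0 :=
      Int.abs_lt_one_iff.1 (by exact_mod_cast habs ▸ (hx e).2)
    rw [h0, Int.cast_zero, abs_zero] at habs
    exact (hx e).1.ne habs
  have := card_cutEdges_le_sum_edgeDeg ends (S \ R)
  omega

lemma not_both_ends_mem_of_minimal (hL : IsDefining k I H U ends x L) (hlam : LaminarF L)
    {S : Finset V} (hS : Minimal (· ∈ L) S) (e : E) :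
    ¬((ends e).1 ∈ S ∧ (ends e).2 ∈ S) := by
  rintro ⟨h1, h2⟩
  obtain ⟨T, hT, heT⟩ := hL.exists_mem_cutEdges e
  rw [mem_cutEdges] at heT
  rcases hlam S hS.prop T hT with hST | hST | hTS
  · have := disjoint_left.1 hST h1
    have := disjoint_left.1 hST h2
    tauto
  · have := hST h1
    have := hST h2
    tauto
  · rw [hS.eq_of_le hT hTS] at heT
    tauto

lemma exists_minimal_card_cutEdges_le_three [Nonempty E] (hL : IsDefining k I H U ends x L)
    (hlam : LaminarF L) (hx : ∀ e, 0 < x e ∧ x e < 1) :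
    ∃ S, Minimal (· ∈ L) S ∧ #(cutEdges ends S) ≤ 3 := by
  by_contra! h
  have hLne : L.Nonempty := card_pos.1 (hL.2.1 ▸ Fintype.card_pos)
  have := hlam.two_mul_card_add_two_le (edgeDeg ends)
    (fun S hS => (h S hS).trans_le (card_cutEdges_le_sum_edgeDeg ends S))
    (fun S hS R hR hRS => hL.two_le_sum_edgeDeg_sdiff hx hS hR hRS) hLne
  rw [sum_edgeDeg, hL.2.1] at this
  omega

end IsDefining

theorem laminar_defining_family_gives_core_general
    (k : ℤ) (I H : V → V → ℕ)
    (U : Finset V) (ends : E → V × V) [Nonempty E]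
    (x : E → ℝ)
    (hxe : ∀ e, 0 < x e ∧ x e < 1)
    (L : Finset (Finset V)) (hLlam : LaminarF L)
    (hLdef : IsDefining k I H U ends x L) :
    ∃ C : Finset V, IsCore k I H U ends x C ∧
      ((cutEdges ends C).card = 2 ∨ (cutEdges ends C).card = 3) ∧
      (fRes k I H U C = 1 ∨ fRes k I H U C = 2) ∧
      ∀ e : E, ¬((ends e).1 ∈ C ∧ (ends e).2 ∈ C) := by
  obtain ⟨S, hSmin, hScard⟩ := hLdef.exists_minimal_card_cutEdges_le_three hLlam hxe
  obtain ⟨hScut, hSpos, hStight⟩ := hLdef.1 S hSmin.prop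
  have hSinside := hLdef.not_both_ends_mem_of_minimal hLlam hSmin
  obtain ⟨C, hCS, hC⟩ := exists_isCore_subset hScut hSpos hStight
  have hCcard : #(cutEdges ends C) ≤ 3 :=
    (card_le_card (cutEdges_subset_of_subset ends hCS hSinside)).trans hScard
  have hClt := hC.2.2.1.fRes_lt_card_cutEdges hC.2.1 fun e => (hxe e).2
  have hCpos := hC.2.1
  exact ⟨C, hC, by omega, by omega, fun e he => hSinside e ⟨hCS he.1, hCS he.2⟩⟩

/-- Lemma 4.1 (from HKZ): if there exists a laminar `x`-defining family, then there is an
`x`-core `C` with `d_E(C) ∈ {2,3}` and `f(C) ∈ {1,2}`, and no edge of `E` has both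
endpoints in `C`. -/
theorem laminar_defining_family_gives_core
    (k : ℤ) (I H : V → V → ℕ)
    (hIsymm : ∀ a b, I a b = I b a) (hHsymm : ∀ a b, H a b = H b a)
    (U : Finset V) (ends : E → V × V) [Nonempty E]
    (x : E → ℝ) (hxP : x ∈ polyP k I H U ends)
    (hxe : ∀ e, 0 < x e ∧ x e < 1)
    (L : Finset (Finset V)) (hLlam : LaminarF L)
    (hLdef : IsDefining k I H U ends x L) :
    ∃ C : Finset V, IsCore k I H U ends x C ∧
      ((cutEdges ends C).card = 2 ∨ (cutEdges ends C).card = 3) ∧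
      (fRes k I H U C = 1 ∨ fRes k I H U C = 2) ∧
      ∀ e : E, ¬((ends e).1 ∈ C ∧ (ends e).2 ∈ C) :=
  laminar_defining_family_gives_core_general k I H U ends x hxe L hLlam hLdef
end

section
/- Let k be an integer, I and H multigraphs on the finite set V, U ⊆ V, and let f, P, μ = ⌈(k−3)/2⌉ be as defined. Assume d_H(u) ≤ 1 and d_I(u) + 2·d_H(u) ≥ k − 2 for every u ∈ U, and d_I(u,v) ≥ μ for all u, v ∈ V with d_H(u,v) ≥ 1. Let x be an extreme point of P with 0 < x_e < 1 for every e ∈ E, where E ≠ ∅, and suppose that no laminar x-defining family exists. Then there are distinct u, v ∈ U with d_I(u,v) ≥ μ and d_H(u,v) = 0. -/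
/-!
Suppose there is no ghost pair, and let `L` be a laminar family of `f`-positive tight cuts with
independent incidence vectors, of maximum size. Because `x` is a vertex of `P` strictly inside the
box, the incidence vectors of tight cuts span `ℝ^E`; so if `L` is not defining, some tight cut `S`
has `χ_S ∉ span L`, and we take one crossing as few members of `L` as possible. If `S` crosses
`R ∈ L`, the pair uncrosses, into `S ∩ R, S ∪ R` or into `S \ R, R \ S`: both new sets are tight
and their incidence vectors add up to `χ_S + χ_R`, so one of them lies outside `span L` and crosses
fewer members of `L`. Uncrossing can only fail when two adjacent corners of `S, R` are singletons
of `U`. Then one of `S, R, Sᶜ, Rᶜ` is a pair `{u, v} ⊆ U`, and its positivity gives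
`I(u,v) + 2H(u,v) ≥ μ`; without ghost pairs this forces an `H`-edge with `I(u,v) ≥ μ`, which is
incompatible with `d_H ≤ 1` at a third singleton corner and with the submodular inequality
otherwise. Hence `S` crosses no member of `L`, and `L ∪ {S}` contradicts maximality.
-/

open Finset

variable {V : Type*} [Fintype V] [DecidableEq V] {E : Type*} [Fintype E] [DecidableEq E]

open Filter Topology

theorem sum_sum_mul_eq_of_symm {α : Type*} [Fintype α] {m : α → α → ℕ}
    (hm : ∀ a b, m a b = m b a) {g h : α → α → ℕ} (hgh : ∀ a b, g a b + g b a = h a b + h b a) :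
    ∑ a, ∑ b, m a b * g a b = ∑ a, ∑ b, m a b * h a b := by
  have twice : ∀ g : α → α → ℕ,
      2 * ∑ a, ∑ b, m a b * g a b = ∑ a, ∑ b, m a b * (g a b + g b a) := fun g => by
    have swap : ∑ a, ∑ b, m a b * g b a = ∑ a, ∑ b, m a b * g a b := by
      rw [Finset.sum_comm]; simp_rw [hm]
    simp_rw [mul_add, Finset.sum_add_distrib, swap]; ring
  have := twice g
  simp only [hgh, ← twice h] at this
  omega

theorem notMem_or_notMem_of_add_eq {R M : Type*} [Ring R] [AddCommGroup M] [Module R M]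
    {W : Submodule R M} {a b c d : M} (h : a + b = c + d) (hb : b ∈ W) (ha : a ∉ W) :
    c ∉ W ∨ d ∉ W := by
  by_contra! hcd
  exact ha (eq_sub_of_add_eq h ▸ W.sub_mem (W.add_mem hcd.1 hcd.2) hb)

theorem eq_zero_of_mem_extremePoints {F : Type*} [AddCommGroup F] [Module ℝ F] {A : Set F}
    {x d : F} (hx : x ∈ A.extremePoints ℝ) (hd : ∀ᶠ t in 𝓝 (0 : ℝ), x + t • d ∈ A) : d = 0 := by
  have hneg : ∀ᶠ t in 𝓝 (0 : ℝ), x + (-t) • d ∈ A :=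
    (continuous_neg.tendsto' 0 0 neg_zero).eventually hd
  obtain ⟨t, ⟨hplus, hminus⟩, ht⟩ :=
    ((hd.and hneg).filter_mono nhdsWithin_le_nhds |>.and self_mem_nhdsWithin).exists
      (f := 𝓝[≠] (0 : ℝ))
  have hseg : x ∈ openSegment ℝ (x + t • d) (x + (-t) • d) :=
    ⟨1 / 2, 1 / 2, by norm_num, by norm_num, by norm_num, by module⟩
  exact (smul_eq_zero.mp (add_eq_left.mp (hx.2 hplus hminus hseg))).resolve_left ht

theorem not_exists_eq_singleton {α : Type*} {U S : Finset α} (hS : S.Nontrivial) :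
    ¬∃ u ∈ U, S = {u} :=
  fun ⟨_, _, h⟩ => hS.ne_singleton h

theorem isCut_of_mem_of_notMem {α : Type*} [Fintype α] {S : Finset α} {a b : α} (ha : a ∈ S)
    (hb : b ∉ S) : IsCut S :=
  ⟨⟨a, ha⟩, fun h => hb (h ▸ mem_univ b)⟩

section Degree

variable {α : Type*} {m : α → α → ℕ}

theorem le_dBetween_singleton (m : α → α → ℕ) {u p : α} {B : Finset α} (hp : p ∈ B) :
    m u p ≤ dBetween m {u} B := by
  simpa [dBetween] using single_le_sum (f := m u) (fun _ _ => Nat.zero_le _) hp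

variable [Fintype α] [DecidableEq α]

theorem dBetween_eq_sum_sum (m : α → α → ℕ) (A B : Finset α) :
    dBetween m A B = ∑ a, ∑ b, m a b * if a ∈ A ∧ b ∈ B then 1 else 0 := by
  simp only [dBetween, mul_ite, mul_one, mul_zero, ite_and]
  simp [sum_ite_irrel]

theorem degS_compl (hm : ∀ a b, m a b = m b a) (S : Finset α) : degS m Sᶜ = degS m S := by
  simp only [degS, dBetween_eq_sum_sum]
  refine sum_sum_mul_eq_of_symm hm fun a b => ?_
  by_cases a ∈ S <;> by_cases b ∈ S <;> simp [*]

theorem degS_add_degS (hm : ∀ a b, m a b = m b a) (S R : Finset α) :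
    degS m S + degS m R =
      degS m (S ∩ R) + degS m (S ∪ R) + 2 * dBetween m (S \ R) (R \ S) := by
  simp only [degS, dBetween_eq_sum_sum, mul_sum, ← sum_add_distrib, ← mul_add,
    mul_left_comm _ (m _ _)]
  refine sum_sum_mul_eq_of_symm hm fun a b => ?_
  by_cases a ∈ S <;> by_cases b ∈ S <;> by_cases a ∈ R <;> by_cases b ∈ R <;> simp [*]

theorem two_mul_degS_add_degS (hm : ∀ a b, m a b = m b a) (S R : Finset α) :
    2 * degS m S + degS m R = degS m (S \ R) + degS m (S ∪ R) +
      2 * dBetween m (S ∩ R) Sᶜ + 2 * dBetween m (S \ R) (R \ S) := by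
  simp only [degS, dBetween_eq_sum_sum, mul_sum, ← sum_add_distrib, ← mul_add,
    mul_left_comm _ (m _ _)]
  refine sum_sum_mul_eq_of_symm hm fun a b => ?_
  by_cases a ∈ S <;> by_cases b ∈ S <;> by_cases a ∈ R <;> by_cases b ∈ R <;> simp [*]

theorem degS_singleton_add_degS_singleton (hm : ∀ a b, m a b = m b a) {y z : α} (hyz : y ≠ z) :
    degS m {y} + degS m {z} = degS m {y, z} + 2 * m y z := by
  have h : degS m {y} + degS m {z} = degS m {y, z} + 2 * dBetween m {y} {z} := by
    simp only [degS, dBetween_eq_sum_sum, mul_sum, ← sum_add_distrib, ← mul_add,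
      mul_left_comm _ (m _ _)]
    refine sum_sum_mul_eq_of_symm hm fun a b => ?_
    by_cases a = y <;> by_cases b = y <;> by_cases a = z <;> by_cases b = z <;> simp_all
  simpa [dBetween] using h

theorem add_le_degS_singleton (m : α → α → ℕ) {u p q : α} (hp : p ≠ u) (hq : q ≠ u)
    (hpq : p ≠ q) : m u p + m u q ≤ degS m {u} := by
  rw [← sum_pair hpq, degS, dBetween, sum_singleton]
  exact sum_le_sum_of_subset (by simp [hp.symm, hq.symm])

end Degree

section Crossing

variable {α : Type*} [DecidableEq α] {S R T X : Finset α}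

def Crosses (A B : Finset α) : Prop := (A ∩ B).Nonempty ∧ (A \ B).Nonempty ∧ (B \ A).Nonempty

instance (A B : Finset α) : Decidable (Crosses A B) := inferInstanceAs (Decidable (_ ∧ _ ∧ _))

theorem Crosses.symm (h : Crosses S R) : Crosses R S :=
  ⟨inter_comm S R ▸ h.1, h.2.2, h.2.1⟩

theorem not_crosses_iff : ¬Crosses S R ↔ Disjoint S R ∨ S ⊆ R ∨ R ⊆ S := by
  rw [Crosses, ← not_disjoint_iff_nonempty_inter, sdiff_nonempty, sdiff_nonempty]
  tauto

theorem crosses_of_crosses_mem (hSR : Crosses S R) (hTR : ¬Crosses T R)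
    (hX : X ∈ ({S ∩ R, S ∪ R, S \ R, R \ S} : Finset (Finset α))) (hXT : Crosses X T) :
    Crosses S T := by
  simp only [mem_insert, mem_singleton] at hX
  unfold Crosses at *
  rcases hX with rfl | rfl | rfl | rfl <;>
    simp only [Finset.Nonempty, mem_inter, Finset.mem_sdiff, mem_union] at * <;>
    grind

theorem not_crosses_of_mem (hX : X ∈ ({S ∩ R, S ∪ R, S \ R, R \ S} : Finset (Finset α))) :
    ¬Crosses X R := by
  simp only [mem_insert, mem_singleton] at hX
  rw [not_crosses_iff]
  rcases hX with rfl | rfl | rfl | rfl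
  · exact Or.inr (Or.inl inter_subset_right)
  · exact Or.inr (Or.inr subset_union_right)
  · exact Or.inl sdiff_disjoint
  · exact Or.inr (Or.inl sdiff_subset)

def crossCount (L : Finset (Finset α)) (S : Finset α) : ℕ := #{T ∈ L | Crosses S T}

theorem crossCount_lt_of_mem {L : Finset (Finset α)} (hL : LaminarF L) (hR : R ∈ L)
    (hSR : Crosses S R) (hX : X ∈ ({S ∩ R, S ∪ R, S \ R, R \ S} : Finset (Finset α))) :
    crossCount L X < crossCount L S := by
  have hsub : {T ∈ L | Crosses X T} ⊆ {T ∈ L | Crosses S T}.erase R := by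
    intro T hT
    obtain ⟨hTL, hXT⟩ := mem_filter.mp hT
    refine mem_erase.mpr ⟨?_, mem_filter.mpr ⟨hTL, ?_⟩⟩
    · rintro rfl
      exact not_crosses_of_mem hX hXT
    · exact crosses_of_crosses_mem hSR (not_crosses_iff.mpr (hL T hTL R hR)) hX hXT
  exact (card_le_card hsub).trans_lt (card_erase_lt_of_mem (mem_filter.mpr ⟨hR, hSR⟩))

variable [Fintype α]

theorem Crosses.isCut_inter (h : Crosses S R) : IsCut (S ∩ R) := by
  obtain ⟨⟨a, ha⟩, -, ⟨b, hb⟩⟩ := h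
  exact isCut_of_mem_of_notMem ha (b := b) (by simp_all)

theorem Crosses.isCut_sdiff (h : Crosses S R) : IsCut (S \ R) := by
  obtain ⟨⟨a, ha⟩, ⟨b, hb⟩, -⟩ := h
  exact isCut_of_mem_of_notMem hb (b := a) (by simp_all)

def CutsCross (S R : Finset α) : Prop := Crosses S R ∧ (S ∪ R)ᶜ.Nonempty

theorem CutsCross.symm (h : CutsCross S R) : CutsCross R S :=
  ⟨h.1.symm, union_comm S R ▸ h.2⟩

theorem CutsCross.compl_left (h : CutsCross S R) : CutsCross Sᶜ R := by
  obtain ⟨⟨h1, h2, h3⟩, h4⟩ := h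
  refine ⟨⟨?_, ?_, ?_⟩, ?_⟩ <;>
    simp only [Finset.Nonempty, mem_inter, Finset.mem_sdiff, mem_union, mem_compl] at * <;>
    grind

theorem CutsCross.compl (h : CutsCross S R) : CutsCross Sᶜ Rᶜ :=
  h.compl_left.symm.compl_left.symm

theorem CutsCross.nontrivial_left (h : CutsCross S R) : S.Nontrivial := by
  obtain ⟨⟨⟨a, ha⟩, ⟨b, hb⟩, -⟩, -⟩ := h
  exact ⟨a, (mem_inter.mp ha).1, b, (Finset.mem_sdiff.mp hb).1,
    fun hab => (Finset.mem_sdiff.mp hb).2 (hab ▸ (mem_inter.mp ha).2)⟩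

theorem CutsCross.nontrivial_union (h : CutsCross S R) : (S ∪ R).Nontrivial :=
  h.nontrivial_left.mono subset_union_left

theorem CutsCross.isCut_union (h : CutsCross S R) : IsCut (S ∪ R) := by
  obtain ⟨⟨⟨a, ha⟩, -⟩, ⟨b, hb⟩⟩ := h
  exact isCut_of_mem_of_notMem (mem_union_left R (mem_inter.mp ha).1) (mem_compl.mp hb)

end Crossing

section CutEdges

variable {α : Type*} [DecidableEq α] {ι : Type*} [Fintype ι] {ends : ι → α × α}

theorem cutEdges_compl [Fintype α] (S : Finset α) : cutEdges ends Sᶜ = cutEdges ends S := by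
  ext e; simp only [cutEdges, mem_filter, mem_compl]; tauto

section Indicator

variable [DecidableEq ι]

theorem chiCut_compl [Fintype α] (S : Finset α) : chiCut ends Sᶜ = chiCut ends S := by
  unfold chiCut; rw [cutEdges_compl]

theorem sum_cutEdges_eq_sum_chiCut (S : Finset α) (y : ι → ℝ) :
    ∑ e ∈ cutEdges ends S, y e = ∑ e, chiCut ends S e * y e := by
  simp [chiCut, cutEdges, sum_filter]

theorem chiCut_inter_add_chiCut_union_le (S R : Finset α) (e : ι) :
    chiCut ends (S ∩ R) e + chiCut ends (S ∪ R) e ≤ chiCut ends S e + chiCut ends R e := by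
  simp only [chiCut, cutEdges, mem_filter, mem_univ, true_and, mem_inter, mem_union]
  split_ifs <;> grind

theorem chiCut_sdiff_le (S R : Finset α) (e : ι) :
    chiCut ends (S \ R) e ≤ chiCut ends S e + chiCut ends (S ∩ R) e := by
  simp only [chiCut, cutEdges, mem_filter, mem_univ, true_and, mem_inter, Finset.mem_sdiff]
  split_ifs <;> grind

end Indicator

theorem sum_cutEdges_inter_add_union_le {y : ι → ℝ} (hy : ∀ e, 0 ≤ y e) (S R : Finset α) :
    ∑ e ∈ cutEdges ends (S ∩ R), y e + ∑ e ∈ cutEdges ends (S ∪ R), y e ≤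
      ∑ e ∈ cutEdges ends S, y e + ∑ e ∈ cutEdges ends R, y e := by
  classical
  simp only [sum_cutEdges_eq_sum_chiCut, ← sum_add_distrib, ← add_mul]
  exact sum_le_sum fun e _ =>
    mul_le_mul_of_nonneg_right (chiCut_inter_add_chiCut_union_le S R e) (hy e)

theorem sum_cutEdges_sdiff_le {y : ι → ℝ} (hy : ∀ e, 0 ≤ y e) (S R : Finset α) :
    ∑ e ∈ cutEdges ends (S \ R), y e ≤
      ∑ e ∈ cutEdges ends S, y e + ∑ e ∈ cutEdges ends (S ∩ R), y e := by
  classical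
  simp only [sum_cutEdges_eq_sum_chiCut, ← sum_add_distrib, ← add_mul]
  exact sum_le_sum fun e _ => mul_le_mul_of_nonneg_right (chiCut_sdiff_le S R e) (hy e)

end CutEdges

section Residual

variable {α : Type*} [Fintype α] [DecidableEq α] {k : ℤ} {I H : α → α → ℕ} {U S R : Finset α}

theorem fRes_eq_of_not_singleton (hS : ¬∃ u ∈ U, S = {u}) (hSc : ¬∃ u ∈ U, Sᶜ = {u}) :
    fRes k I H U S = k - degS I S - 2 * degS H S :=
  if_neg fun ⟨u, hu, h⟩ => h.elim (fun h => hS ⟨u, hu, h⟩) fun h => hSc ⟨u, hu, h⟩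

theorem CutsCross.fRes_left (h : CutsCross S R) : fRes k I H U S = k - degS I S - 2 * degS H S :=
  fRes_eq_of_not_singleton (not_exists_eq_singleton h.nontrivial_left)
    (not_exists_eq_singleton h.compl_left.nontrivial_left)

theorem fRes_compl (hI : ∀ a b, I a b = I b a) (hH : ∀ a b, H a b = H b a) (S : Finset α) :
    fRes k I H U Sᶜ = fRes k I H U S := by
  have hexc : (∃ u ∈ U, Sᶜ = {u} ∨ Sᶜᶜ = {u}) ↔ ∃ u ∈ U, S = {u} ∨ Sᶜ = {u} := by
    simp only [compl_compl, or_comm]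
  simp only [fRes, degS_compl hI, degS_compl hH, hexc]

theorem isTight_compl {ι : Type*} [Fintype ι] {ends : ι → α × α} {x : ι → ℝ}
    (hI : ∀ a b, I a b = I b a) (hH : ∀ a b, H a b = H b a) (S : Finset α) :
    IsTight k I H U ends x Sᶜ ↔ IsTight k I H U ends x S := by
  rw [IsTight, IsTight, cutEdges_compl, fRes_compl hI hH]

end Residual

section Polytope

variable {α : Type*} [Fintype α] [DecidableEq α] {ι : Type*} [Fintype ι] {k : ℤ}
  {I H : α → α → ℕ} {U S R : Finset α} {ends : ι → α × α} {x : ι → ℝ}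

theorem isTight_inter_union_of_le [DecidableEq ι] (hx : x ∈ polyP k I H U ends)
    (hxpos : ∀ e, 0 < x e) (hS : IsTight k I H U ends x S) (hR : IsTight k I H U ends x R)
    (hcI : IsCut (S ∩ R)) (hcU : IsCut (S ∪ R))
    (hf : fRes k I H U S + fRes k I H U R ≤ fRes k I H U (S ∩ R) + fRes k I H U (S ∪ R)) :
    IsTight k I H U ends x (S ∩ R) ∧ IsTight k I H U ends x (S ∪ R) ∧
      chiCut ends S + chiCut ends R = chiCut ends (S ∩ R) + chiCut ends (S ∪ R) := by
  have hfR : (fRes k I H U S + fRes k I H U R : ℝ) ≤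
      fRes k I H U (S ∩ R) + fRes k I H U (S ∪ R) := by exact_mod_cast hf
  have hsum := sum_cutEdges_inter_add_union_le (ends := ends) (fun e => (hxpos e).le) S R
  have hI := hx.2 _ hcI
  have hU := hx.2 _ hcU
  unfold IsTight at *
  refine ⟨by linarith, by linarith, ?_⟩
  -- the nonnegative slack of `chiCut_inter_add_chiCut_union_le` has zero `x`-weight, and `x > 0`
  set slack : ι → ℝ := fun e => chiCut ends S e + chiCut ends R e -
    chiCut ends (S ∩ R) e - chiCut ends (S ∪ R) e
  have hzero : ∑ e, slack e * x e = 0 := by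
    simp only [slack, sub_mul, add_mul, sum_sub_distrib, sum_add_distrib,
      ← sum_cutEdges_eq_sum_chiCut]
    linarith
  have hnonneg : ∀ e, 0 ≤ slack e * x e := fun e => mul_nonneg
    (by linarith [chiCut_inter_add_chiCut_union_le (ends := ends) S R e]) (hxpos e).le
  funext e
  have he := (sum_eq_zero_iff_of_nonneg fun e _ => hnonneg e).mp hzero e (mem_univ e)
  have : slack e = 0 := (mul_eq_zero.mp he).resolve_right (hxpos e).ne'
  simp only [Pi.add_apply]
  linarith

theorem fRes_sdiff_add_fRes_union_le (hx : x ∈ polyP k I H U ends)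
    (hS : IsTight k I H U ends x S) (hR : IsTight k I H U ends x R) (hcD : IsCut (S \ R))
    (hcU : IsCut (S ∪ R)) :
    fRes k I H U (S \ R) + fRes k I H U (S ∪ R) ≤ 2 * fRes k I H U S + fRes k I H U R := by
  have hy : ∀ e, 0 ≤ x e := fun e => (hx.1 e).1
  have hD := hx.2 _ hcD
  have hU := hx.2 _ hcU
  have h1 := sum_cutEdges_sdiff_le (ends := ends) hy S R
  have h2 := sum_cutEdges_inter_add_union_le (ends := ends) hy S R
  unfold IsTight at hS hR
  have : (fRes k I H U (S \ R) + fRes k I H U (S ∪ R) : ℝ) ≤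
      2 * fRes k I H U S + fRes k I H U R := by linarith
  exact_mod_cast this

theorem fRes_pos_of_chiCut_ne_zero [DecidableEq ι] (hxpos : ∀ e, 0 < x e)
    (hS : IsTight k I H U ends x S) (hχ : chiCut ends S ≠ 0) : 0 < fRes k I H U S := by
  have hne : (cutEdges ends S).Nonempty := by
    by_contra h
    exact hχ (funext fun e => by simp [chiCut, not_nonempty_iff_eq_empty.mp h])
  have : (0 : ℝ) < fRes k I H U S := hS ▸ sum_pos (fun e _ => hxpos e) hne
  exact_mod_cast this

theorem eventually_add_smul_mem_polyP (hx : x ∈ polyP k I H U ends)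
    (hxe : ∀ e, 0 < x e ∧ x e < 1) {d : ι → ℝ}
    (hd : ∀ S, IsCut S → IsTight k I H U ends x S → ∑ e ∈ cutEdges ends S, d e = 0) :
    ∀ᶠ t in 𝓝 (0 : ℝ), x + t • d ∈ polyP k I H U ends := by
  have hbox : ∀ e, ∀ᶠ t in 𝓝 (0 : ℝ), 0 ≤ x e + t * d e ∧ x e + t * d e ≤ 1 := fun e => by
    have hc : Tendsto (fun t : ℝ => x e + t * d e) (𝓝 0) (𝓝 (x e)) :=
      (by fun_prop : Continuous fun t : ℝ => x e + t * d e).tendsto' 0 _ (by simp)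
    exact (hc.eventually (Ioo_mem_nhds (hxe e).1 (hxe e).2)).mono fun t ht => ⟨ht.1.le, ht.2.le⟩
  have hcut : ∀ S, ∀ᶠ t in 𝓝 (0 : ℝ),
      IsCut S → (fRes k I H U S : ℝ) ≤ ∑ e ∈ cutEdges ends S, (x e + t * d e) := fun S => by
    by_cases hS : IsCut S
    swap
    · exact Eventually.of_forall fun _ h => absurd h hS
    simp only [sum_add_distrib, ← mul_sum]
    rcases (hx.2 S hS).eq_or_lt with htight | hlt
    · exact Eventually.of_forall fun t _ => by rw [hd S hS htight.symm]; simpa using hx.2 S hS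
    · have hc : Tendsto (fun t : ℝ => ∑ e ∈ cutEdges ends S, x e + t * ∑ e ∈ cutEdges ends S, d e)
          (𝓝 0) (𝓝 (∑ e ∈ cutEdges ends S, x e)) :=
        (by fun_prop : Continuous fun t : ℝ =>
          ∑ e ∈ cutEdges ends S, x e + t * ∑ e ∈ cutEdges ends S, d e).tendsto' 0 _ (by simp)
      exact (hc.eventually (lt_mem_nhds hlt)).mono fun t ht _ => ht.le
  filter_upwards [eventually_all.2 hbox, eventually_all.2 hcut] with t h1 h2
  exact ⟨h1, h2⟩

theorem exists_isTight_chiCut_notMem [DecidableEq ι]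
    (hx : x ∈ (polyP k I H U ends).extremePoints ℝ) (hxe : ∀ e, 0 < x e ∧ x e < 1)
    {W : Submodule ℝ (ι → ℝ)} (hW : W ≠ ⊤) :
    ∃ S, IsCut S ∧ IsTight k I H U ends x S ∧ chiCut ends S ∉ W := by
  obtain ⟨ℓ, hℓ, hWℓ⟩ := Submodule.exists_le_ker_of_lt_top W (lt_top_iff_ne_top.mpr hW)
  set d : ι → ℝ := fun e => ℓ fun j => if e = j then 1 else 0
  have hℓd : ∀ y, ℓ y = ∑ e, y e * d e := fun y => by
    simp [d, LinearMap.pi_apply_eq_sum_univ ℓ y]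
  by_contra! hall
  have hd0 : d = 0 := by
    refine eq_zero_of_mem_extremePoints hx
      (eventually_add_smul_mem_polyP hx.1 hxe fun S hS ht => ?_)
    rw [sum_cutEdges_eq_sum_chiCut, ← hℓd]
    exact hWℓ (hall S hS ht)
  exact hℓ (LinearMap.ext fun y => by simp [hℓd, hd0])

end Polytope

section Laminar

variable {α : Type*} [Fintype α] [DecidableEq α] {ι : Type*} [Fintype ι] [DecidableEq ι]
  {k : ℤ} {I H : α → α → ℕ} {U : Finset α} {ends : ι → α × α} {x : ι → ℝ}
  {L : Finset (Finset α)}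

def IsLaminarIndepFamily (k : ℤ) (I H : α → α → ℕ) (U : Finset α) (ends : ι → α × α)
    (x : ι → ℝ) (L : Finset (Finset α)) : Prop :=
  (∀ S ∈ L, IsCut S ∧ 0 < fRes k I H U S ∧ IsTight k I H U ends x S) ∧ LaminarF L ∧
    LinearIndepOn ℝ (chiCut ends) (L : Set (Finset α))

theorem IsLaminarIndepFamily.isDefining (hL : IsLaminarIndepFamily k I H U ends x L)
    (hspan : Submodule.span ℝ (chiCut ends '' L) = ⊤) : IsDefining k I H U ends x L := by
  refine ⟨hL.1, ?_, hL.2.2⟩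
  have hcard := linearIndependent_iff_card_eq_finrank_span.mp hL.2.2
  rw [Set.finrank, ← Set.image_eq_range, hspan, finrank_top,
    Module.finrank_fintype_fun_eq_card] at hcard
  simpa using hcard

theorem IsLaminarIndepFamily.insert (hL : IsLaminarIndepFamily k I H U ends x L) {S : Finset α}
    (hS : IsCut S ∧ 0 < fRes k I H U S ∧ IsTight k I H U ends x S) (hSL : ∀ T ∈ L, ¬Crosses S T)
    (hSW : chiCut ends S ∉ Submodule.span ℝ (chiCut ends '' L)) :
    IsLaminarIndepFamily k I H U ends x (insert S L) := by
  have hSnotin : S ∉ L := fun h => hSW (Submodule.subset_span (Set.mem_image_of_mem _ h))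
  refine ⟨?_, ?_, ?_⟩
  · simpa [forall_mem_insert] using ⟨hS, hL.1⟩
  · simp only [LaminarF, forall_mem_insert]
    refine ⟨⟨Or.inr (Or.inl subset_rfl), fun B hB => not_crosses_iff.mp (hSL B hB)⟩,
      fun A hA => ⟨?_, fun B hB => hL.2.1 A hA B hB⟩⟩
    rcases not_crosses_iff.mp (hSL A hA) with h | h | h
    exacts [Or.inl h.symm, Or.inr (Or.inr h), Or.inr (Or.inl h)]
  · rw [coe_insert, linearIndepOn_insert (by simpa using hSnotin)]
    exact ⟨hL.2.2, hSW⟩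

theorem exists_isLaminarIndepFamily_forall_card_le :
    ∃ L, IsLaminarIndepFamily k I H U ends x L ∧
      ∀ L', IsLaminarIndepFamily k I H U ends x L' → #L' ≤ #L := by
  classical
  have hempty : IsLaminarIndepFamily k I H U ends x ∅ := ⟨by simp, by simp [LaminarF], by simp⟩
  obtain ⟨L, hL, hmax⟩ := exists_max_image {L | IsLaminarIndepFamily k I H U ends x L} card
    ⟨∅, by simpa using hempty⟩
  exact ⟨L, by simpa using hL, fun L' hL' => hmax L' (by simpa using hL')⟩

end Laminar

section Uncrossing

variable {α : Type*} [Fintype α] [DecidableEq α] {ι : Type*} [Fintype ι] {k : ℤ}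
  {I H : α → α → ℕ} {U S R : Finset α} {ends : ι → α × α} {x : ι → ℝ}

theorem CutsCross.uncross_inter_union [DecidableEq ι] (hI : ∀ a b, I a b = I b a)
    (hH : ∀ a b, H a b = H b a) (hx : x ∈ polyP k I H U ends) (hxpos : ∀ e, 0 < x e)
    (hc : CutsCross S R) (hS : IsTight k I H U ends x S) (hR : IsTight k I H U ends x R)
    (h1 : ¬∃ u ∈ U, S ∩ R = {u}) (h4 : ¬∃ u ∈ U, (S ∪ R)ᶜ = {u}) :
    IsTight k I H U ends x (S ∩ R) ∧ IsTight k I H U ends x (S ∪ R) ∧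
      chiCut ends S + chiCut ends R = chiCut ends (S ∩ R) + chiCut ends (S ∪ R) := by
  refine isTight_inter_union_of_le hx hxpos hS hR hc.1.isCut_inter hc.isCut_union ?_
  have hIc : (S ∩ R)ᶜ.Nontrivial := compl_inter S R ▸ hc.compl.nontrivial_union
  rw [hc.fRes_left, hc.symm.fRes_left, fRes_eq_of_not_singleton h1 (not_exists_eq_singleton hIc),
    fRes_eq_of_not_singleton (not_exists_eq_singleton hc.nontrivial_union) h4]
  have := degS_add_degS hI S R
  have := degS_add_degS hH S R
  omega

theorem CutsCross.two_mul_dBetween_le (hI : ∀ a b, I a b = I b a)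
    (hH : ∀ a b, H a b = H b a) (hx : x ∈ polyP k I H U ends) (hc : CutsCross S R)
    (hS : IsTight k I H U ends x S) (hR : IsTight k I H U ends x R)
    (h2 : ¬∃ u ∈ U, S \ R = {u}) (h4 : ¬∃ u ∈ U, (S ∪ R)ᶜ = {u}) :
    2 * ((dBetween I (S ∩ R) Sᶜ : ℤ) + 2 * dBetween H (S ∩ R) Sᶜ) ≤ k := by
  have h := fRes_sdiff_add_fRes_union_le hx hS hR hc.1.isCut_sdiff hc.isCut_union
  have hDc : (S \ R)ᶜ.Nontrivial := by
    rw [sdiff_eq_inter_compl, compl_inter, compl_compl]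
    exact hc.compl_left.nontrivial_union
  rw [hc.fRes_left, hc.symm.fRes_left, fRes_eq_of_not_singleton h2 (not_exists_eq_singleton hDc),
    fRes_eq_of_not_singleton (not_exists_eq_singleton hc.nontrivial_union) h4] at h
  have := two_mul_degS_add_degS hI S R
  have := two_mul_degS_add_degS hH S R
  omega

/-- The hypotheses of the theorem on `I`, `H` and `U`, with the absence of ghost pairs restated
without `μ = ⌈(k - 3) / 2⌉`: a pair of `U`-vertices with `2(I + 2H) ≥ k - 3` has `I + 2H ≥ μ`, so
it carries an `H`-edge and then `I ≥ μ`, i.e. `I + 2H ≥ μ + 2 > k / 2`. -/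
structure GhostFree (k : ℤ) (I H : α → α → ℕ) (U : Finset α) : Prop where
  symm_I : ∀ a b, I a b = I b a
  symm_H : ∀ a b, H a b = H b a
  degS_H_le_one : ∀ u ∈ U, degS H {u} ≤ 1
  le_degS : ∀ u ∈ U, k - 2 ≤ (degS I {u} : ℤ) + 2 * (degS H {u} : ℤ)
  heavy : ∀ y ∈ U, ∀ z ∈ U, y ≠ z → k - 3 ≤ 2 * ((I y z : ℤ) + 2 * H y z) →
    1 ≤ H y z ∧ k < 2 * ((I y z : ℤ) + 2 * H y z)

theorem GhostFree.heavy_of_degS_lt (hG : GhostFree k I H U) {y z : α} (hy : y ∈ U) (hz : z ∈ U)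
    (hyz : y ≠ z) (h : (degS I {y, z} : ℤ) + 2 * degS H {y, z} < k) :
    1 ≤ H y z ∧ k < 2 * ((I y z : ℤ) + 2 * H y z) := by
  refine hG.heavy y hy z hz hyz ?_
  have := degS_singleton_add_degS_singleton hG.symm_I hyz
  have := degS_singleton_add_degS_singleton hG.symm_H hyz
  have := hG.le_degS y hy
  have := hG.le_degS z hz
  omega

/-- `S = {u, p}` is a positive pair, so `u` and `p` are joined by an `H`-edge. A `U`-singleton
`R \ S` or `(S ∪ R)ᶜ` would make `R` or `Rᶜ` a second such pair through `u` or `p`, against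
`d_H ≤ 1`; otherwise `two_mul_dBetween_le` for `R, S` bounds `2(I + 2H)(u, p)` by `k`. -/
theorem CutsCross.false_of_inter_eq_of_sdiff_eq (hG : GhostFree k I H U)
    (hx : x ∈ polyP k I H U ends) (hc : CutsCross S R) (hSpos : 0 < fRes k I H U S)
    (hRpos : 0 < fRes k I H U R) (hS : IsTight k I H U ends x S) (hR : IsTight k I H U ends x R)
    {u p : α} (hu : u ∈ U) (hp : p ∈ U) (h1 : S ∩ R = {u}) (h2 : S \ R = {p}) : False := by
  have hu' : u ∈ S ∩ R := h1 ▸ mem_singleton_self u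
  have hp' : p ∈ S \ R := h2 ▸ mem_singleton_self p
  have hup : u ≠ p := fun h => (Finset.mem_sdiff.mp hp').2 (h ▸ (mem_inter.mp hu').2)
  have hfS := hc.fRes_left (k := k) (I := I) (H := H) (U := U)
  have hfR := hc.symm.fRes_left (k := k) (I := I) (H := H) (U := U)
  have hSeq : S = {u, p} := by rw [← sdiff_union_inter S R, h1, h2, union_comm, ← insert_eq]
  obtain ⟨hHup, hkup⟩ := hG.heavy_of_degS_lt hu hp hup (by rw [← hSeq]; omega)
  by_cases h3 : ∃ q ∈ U, R \ S = {q}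
  · obtain ⟨q, hq, h3⟩ := h3
    have hq' : q ∈ R \ S := h3 ▸ mem_singleton_self q
    have hReq : R = {u, q} := by
      rw [← sdiff_union_inter R S, h3, inter_comm, h1, union_comm, ← insert_eq]
    have huq : u ≠ q := by rintro rfl; simp_all
    obtain ⟨hHuq, -⟩ := hG.heavy_of_degS_lt hu hq huq (by rw [← hReq]; omega)
    have := add_le_degS_singleton H hup.symm huq.symm (by rintro rfl; simp_all)
    have := hG.degS_H_le_one u hu
    omega
  by_cases h4 : ∃ w ∈ U, (S ∪ R)ᶜ = {w}
  · obtain ⟨w, hw, h4⟩ := h4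
    have hw' : w ∈ (S ∪ R)ᶜ := h4 ▸ mem_singleton_self w
    have hRc : Rᶜ = {p, w} := by
      rw [insert_eq, ← h2, ← h4]
      ext a; simp only [mem_compl, mem_union, Finset.mem_sdiff]; tauto
    have hpw : p ≠ w := by rintro rfl; simp_all
    obtain ⟨hHpw, -⟩ := hG.heavy_of_degS_lt hp hw hpw
      (by rw [← hRc, degS_compl hG.symm_I, degS_compl hG.symm_H]; omega)
    have hdeg := add_le_degS_singleton H hup hpw.symm (by rintro rfl; simp_all)
    rw [hG.symm_H p u] at hdeg
    have := hG.degS_H_le_one p hp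
    omega
  have hcore := hc.symm.two_mul_dBetween_le hG.symm_I hG.symm_H hx hR hS h3 (by rwa [union_comm])
  rw [inter_comm, h1] at hcore
  have hpR : p ∈ Rᶜ := mem_compl.mpr (Finset.mem_sdiff.mp hp').2
  have := le_dBetween_singleton I (u := u) hpR
  have := le_dBetween_singleton H (u := u) hpR
  omega

theorem CutsCross.false_of_adjacent_singletons (hG : GhostFree k I H U)
    (hx : x ∈ polyP k I H U ends) (hc : CutsCross S R) (hSpos : 0 < fRes k I H U S)
    (hRpos : 0 < fRes k I H U R) (hS : IsTight k I H U ends x S) (hR : IsTight k I H U ends x R)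
    (h14 : (∃ u ∈ U, S ∩ R = {u}) ∨ ∃ u ∈ U, (S ∪ R)ᶜ = {u})
    (h23 : (∃ u ∈ U, S \ R = {u}) ∨ ∃ u ∈ U, R \ S = {u}) : False := by
  have hSc := (isTight_compl hG.symm_I hG.symm_H S).mpr hS
  have hRc := (isTight_compl hG.symm_I hG.symm_H R).mpr hR
  have hScpos := (fRes_compl (U := U) hG.symm_I hG.symm_H S).symm ▸ hSpos
  have hRcpos := (fRes_compl (U := U) hG.symm_I hG.symm_H R).symm ▸ hRpos
  rcases h14 with ⟨u, hu, h1⟩ | ⟨u, hu, h4⟩ <;> rcases h23 with ⟨p, hp, h2⟩ | ⟨p, hp, h3⟩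
  · exact hc.false_of_inter_eq_of_sdiff_eq hG hx hSpos hRpos hS hR hu hp h1 h2
  · exact hc.symm.false_of_inter_eq_of_sdiff_eq hG hx hRpos hSpos hR hS hu hp
      (inter_comm R S ▸ h1) h3
  · exact hc.compl.symm.false_of_inter_eq_of_sdiff_eq hG hx hRcpos hScpos hRc hSc hu hp
      (by rw [← compl_union, union_comm, h4]) (by rw [compl_sdiff_compl, h2])
  · exact hc.compl.false_of_inter_eq_of_sdiff_eq hG hx hScpos hRcpos hSc hRc hu hp
      (by rw [← compl_union, h4]) (by rw [compl_sdiff_compl, h3])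

theorem exists_tight_uncrossing [DecidableEq ι] (hG : GhostFree k I H U)
    (hx : x ∈ polyP k I H U ends) (hxpos : ∀ e, 0 < x e) (hSpos : 0 < fRes k I H U S)
    (hRpos : 0 < fRes k I H U R) (hS : IsTight k I H U ends x S) (hR : IsTight k I H U ends x R)
    (hSR : Crosses S R) :
    ∃ X ∈ ({S ∩ R, S ∪ R, S \ R, R \ S} : Finset (Finset α)),
      ∃ Y ∈ ({S ∩ R, S ∪ R, S \ R, R \ S} : Finset (Finset α)),
        IsCut X ∧ IsCut Y ∧ IsTight k I H U ends x X ∧ IsTight k I H U ends x Y ∧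
          chiCut ends S + chiCut ends R = chiCut ends X + chiCut ends Y := by
  have hcompl : ∀ T, IsTight k I H U ends x Tᶜ ↔ IsTight k I H U ends x T :=
    isTight_compl hG.symm_I hG.symm_H
  by_cases h4 : (S ∪ R)ᶜ.Nonempty
  swap
  · have hcover : ∀ a, a ∈ S ∨ a ∈ R := fun a => mem_union.mp <| eq_univ_iff_forall.mp
      ((compl_eq_empty_iff _).mp (not_nonempty_iff_eq_empty.mp h4)) a
    have hSR' : S \ R = Rᶜ := by
      ext a; have := hcover a; simp only [Finset.mem_sdiff, mem_compl]; tauto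
    have hRS' : R \ S = Sᶜ := by
      ext a; have := hcover a; simp only [Finset.mem_sdiff, mem_compl]; tauto
    refine ⟨S \ R, by simp, R \ S, by simp, hSR.isCut_sdiff, hSR.symm.isCut_sdiff, ?_, ?_, ?_⟩
    · rwa [hSR', hcompl]
    · rwa [hRS', hcompl]
    · rw [hSR', hRS', chiCut_compl, chiCut_compl, add_comm]
  have hc : CutsCross S R := ⟨hSR, h4⟩
  by_cases h14 : (∃ u ∈ U, S ∩ R = {u}) ∨ ∃ u ∈ U, (S ∪ R)ᶜ = {u}
  · by_cases h23 : (∃ u ∈ U, S \ R = {u}) ∨ ∃ u ∈ U, R \ S = {u}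
    · exact (hc.false_of_adjacent_singletons hG hx hSpos hRpos hS hR h14 h23).elim
    obtain ⟨h2, h3⟩ := not_or.mp h23
    have hinter : Sᶜ ∩ R = R \ S := by rw [inter_comm, sdiff_eq_inter_compl]
    have hunion : Sᶜ ∪ R = (S \ R)ᶜ := by rw [sdiff_eq_inter_compl, compl_inter, compl_compl]
    obtain ⟨htRS, htSR, hχ⟩ := hc.compl_left.uncross_inter_union hG.symm_I hG.symm_H hx hxpos
      ((hcompl S).mpr hS) hR (by rwa [hinter]) (by rwa [hunion, compl_compl])
    rw [hinter, hunion, chiCut_compl, chiCut_compl] at hχ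
    rw [hinter] at htRS
    rw [hunion, hcompl] at htSR
    exact ⟨R \ S, by simp, S \ R, by simp, hSR.symm.isCut_sdiff, hSR.isCut_sdiff, htRS, htSR, hχ⟩
  obtain ⟨h1, h4'⟩ := not_or.mp h14
  obtain ⟨htI, htU, hχ⟩ := hc.uncross_inter_union hG.symm_I hG.symm_H hx hxpos hS hR h1 h4'
  exact ⟨S ∩ R, by simp, S ∪ R, by simp, hSR.isCut_inter, hc.isCut_union, htI, htU, hχ⟩

end Uncrossing

section Iteration

variable {α : Type*} [Fintype α] [DecidableEq α] {ι : Type*} [Fintype ι] [DecidableEq ι]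
  {k : ℤ} {I H : α → α → ℕ} {U S : Finset α} {ends : ι → α × α} {x : ι → ℝ}
  {L : Finset (Finset α)}

theorem exists_crossCount_lt (hG : GhostFree k I H U) (hx : x ∈ polyP k I H U ends)
    (hxpos : ∀ e, 0 < x e)
    (hLtight : ∀ T ∈ L, IsCut T ∧ 0 < fRes k I H U T ∧ IsTight k I H U ends x T)
    (hLlam : LaminarF L) (hS : IsTight k I H U ends x S)
    (hSW : chiCut ends S ∉ Submodule.span ℝ (chiCut ends '' L)) {R : Finset α} (hR : R ∈ L)
    (hSR : Crosses S R) :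
    ∃ X, IsCut X ∧ IsTight k I H U ends x X ∧
      chiCut ends X ∉ Submodule.span ℝ (chiCut ends '' L) ∧ crossCount L X < crossCount L S := by
  have hSpos := fRes_pos_of_chiCut_ne_zero hxpos hS fun h => hSW (h ▸ Submodule.zero_mem _)
  obtain ⟨-, hRpos, hRt⟩ := hLtight R hR
  obtain ⟨X, hX, Y, hY, hcX, hcY, htX, htY, hχ⟩ :=
    exists_tight_uncrossing hG hx hxpos hSpos hRpos hS hRt hSR
  rcases notMem_or_notMem_of_add_eq hχ (Submodule.subset_span (Set.mem_image_of_mem _ hR)) hSW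
    with hXW | hYW
  · exact ⟨X, hcX, htX, hXW, crossCount_lt_of_mem hLlam hR hSR hX⟩
  · exact ⟨Y, hcY, htY, hYW, crossCount_lt_of_mem hLlam hR hSR hY⟩

theorem exists_isTight_forall_not_crosses (hG : GhostFree k I H U)
    (hx : x ∈ polyP k I H U ends) (hxpos : ∀ e, 0 < x e)
    (hLtight : ∀ T ∈ L, IsCut T ∧ 0 < fRes k I H U T ∧ IsTight k I H U ends x T)
    (hLlam : LaminarF L) (hcS : IsCut S) (hS : IsTight k I H U ends x S)
    (hSW : chiCut ends S ∉ Submodule.span ℝ (chiCut ends '' L)) :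
    ∃ X, IsCut X ∧ 0 < fRes k I H U X ∧ IsTight k I H U ends x X ∧
      chiCut ends X ∉ Submodule.span ℝ (chiCut ends '' L) ∧ ∀ T ∈ L, ¬Crosses X T := by
  induction hn : crossCount L S using Nat.strong_induction_on generalizing S with
  | _ n ih =>
    by_cases hcross : ∃ R ∈ L, Crosses S R
    · obtain ⟨R, hR, hSR⟩ := hcross
      obtain ⟨X, hcX, htX, hXW, hlt⟩ :=
        exists_crossCount_lt hG hx hxpos hLtight hLlam hS hSW hR hSR
      exact ih _ (hn ▸ hlt) hcX htX hXW rfl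
    · exact ⟨S, hcS, fRes_pos_of_chiCut_ne_zero hxpos hS fun h => hSW (h ▸ Submodule.zero_mem _),
        hS, hSW, fun T hT hST => hcross ⟨T, hT, hST⟩⟩

end Iteration

theorem ghostFree_of_forall_ne_zero {α : Type*} [Fintype α] [DecidableEq α] {k μ : ℤ}
    {I H : α → α → ℕ} {U : Finset α} (hμ : μ = ⌈((k : ℚ) - 3) / 2⌉)
    (hI : ∀ a b, I a b = I b a) (hH : ∀ a b, H a b = H b a)
    (hU1 : ∀ u ∈ U, degS H {u} ≤ 1)
    (hU2 : ∀ u ∈ U, k - 2 ≤ (degS I {u} : ℤ) + 2 * (degS H {u} : ℤ))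
    (hIH : ∀ u v : α, 1 ≤ H u v → μ ≤ (I u v : ℤ))
    (hng : ∀ u ∈ U, ∀ v ∈ U, u ≠ v → μ ≤ (I u v : ℤ) → H u v ≠ 0) : GhostFree k I H U := by
  have hlo : k - 3 ≤ 2 * μ := by
    have : ((k : ℚ) - 3) / 2 ≤ μ := hμ ▸ Int.le_ceil _
    have : (k : ℚ) - 3 ≤ 2 * μ := by linarith
    exact_mod_cast this
  have hhi : 2 * μ < k - 1 := by
    have : (μ : ℚ) < ((k : ℚ) - 3) / 2 + 1 := hμ ▸ Int.ceil_lt_add_one _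
    have : 2 * (μ : ℚ) < k - 1 := by linarith
    exact_mod_cast this
  refine ⟨hI, hH, hU1, hU2, fun y hy z hz hyz hm => ?_⟩
  have hH1 : 1 ≤ H y z := Nat.one_le_iff_ne_zero.mpr fun h0 =>
    hng y hy z hz hyz (by rw [h0] at hm; omega) h0
  have := hIH y z hH1
  exact ⟨hH1, by omega⟩

theorem no_laminar_defining_family_gives_ghost_pair_general
    (k : ℤ) (μ : ℤ) (hμ : μ = ⌈((k : ℚ) - 3) / 2⌉)
    (I H : V → V → ℕ)
    (hIsymm : ∀ a b, I a b = I b a) (hHsymm : ∀ a b, H a b = H b a)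
    (U : Finset V) (ends : E → V × V)
    (hU1 : ∀ u ∈ U, degS H {u} ≤ 1)
    (hU2 : ∀ u ∈ U, k - 2 ≤ (degS I {u} : ℤ) + 2 * (degS H {u} : ℤ))
    (hIH : ∀ u v : V, 1 ≤ H u v → μ ≤ (I u v : ℤ))
    (x : E → ℝ) (hx : x ∈ (polyP k I H U ends).extremePoints ℝ)
    (hxe : ∀ e, 0 < x e ∧ x e < 1)
    (hnolam : ¬ ∃ L : Finset (Finset V), LaminarF L ∧ IsDefining k I H U ends x L) :
    ∃ u ∈ U, ∃ v ∈ U, u ≠ v ∧ μ ≤ (I u v : ℤ) ∧ H u v = 0 := by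
  by_contra! hng
  have hG := ghostFree_of_forall_ne_zero hμ hIsymm hHsymm hU1 hU2 hIH hng
  have hxpos : ∀ e, 0 < x e := fun e => (hxe e).1
  obtain ⟨L, hL, hLmax⟩ := exists_isLaminarIndepFamily_forall_card_le (k := k) (I := I) (H := H)
    (U := U) (ends := ends) (x := x)
  have hW : Submodule.span ℝ (chiCut ends '' L) ≠ ⊤ := fun h => hnolam ⟨L, hL.2.1, hL.isDefining h⟩
  obtain ⟨S, hcS, hS, hSW⟩ := exists_isTight_chiCut_notMem hx hxe hW
  obtain ⟨X, hcX, hXpos, hX, hXW, hXL⟩ :=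
    exists_isTight_forall_not_crosses hG hx.1 hxpos hL.1 hL.2.1 hcS hS hSW
  have hXnotin : X ∉ L := fun h => hXW (Submodule.subset_span (Set.mem_image_of_mem _ h))
  have := hLmax _ (hL.insert ⟨hcX, hXpos, hX⟩ hXL hXW)
  rw [card_insert_of_notMem hXnotin] at this
  omega

/-- Lemma 4.2: under the assumptions of the main lemma, if no laminar `x`-defining family
exists, then there are distinct `u, v ∈ U` with `d_I(u,v) ≥ μ` and `d_H(u,v) = 0`. -/
theorem no_laminar_defining_family_gives_ghost_pair
    (k : ℤ) (μ : ℤ) (hμ : μ = ⌈((k : ℚ) - 3) / 2⌉)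
    (I H : V → V → ℕ)
    (hIsymm : ∀ a b, I a b = I b a) (hHsymm : ∀ a b, H a b = H b a)
    (U : Finset V) (ends : E → V × V) [Nonempty E]
    (hU1 : ∀ u ∈ U, degS H {u} ≤ 1)
    (hU2 : ∀ u ∈ U, k - 2 ≤ (degS I {u} : ℤ) + 2 * (degS H {u} : ℤ))
    (hIH : ∀ u v : V, 1 ≤ H u v → μ ≤ (I u v : ℤ))
    (x : E → ℝ) (hx : x ∈ (polyP k I H U ends).extremePoints ℝ)
    (hxe : ∀ e, 0 < x e ∧ x e < 1)
    (hnolam : ¬ ∃ L : Finset (Finset V), LaminarF L ∧ IsDefining k I H U ends x L) :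
    ∃ u ∈ U, ∃ v ∈ U, u ≠ v ∧ μ ≤ (I u v : ℤ) ∧ H u v = 0 :=
  no_laminar_defining_family_gives_ghost_pair_general k μ hμ I H hIsymm hHsymm U ends hU1 hU2 hIH x
    hx hxe hnolam
end
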